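/- arXiv:2509.06014 — 2 statements merged into one kernel-verified Lean document; each statement's English description precedes it below -/
import Mathlib

section
/- For any vector a in ℝ³ and any n ∈ ℕ, the average of (a · x)^(2n) over the unit sphere S² (with its uniform probability measure) equals ‖a‖^(2n) / (2n + 1). -/
open MeasureTheory

section SphereAvgAuxSection

open Real Set Metric

namespace SphereAvgAux

noncomputable section

/-- One-sided Gaussian-type moment. -/
lemma int_Ioi_pow_exp (m : ℕ) :
    ∫ x in Ioi (0 : ℝ), x ^ m * Real.exp (-x ^ 2)
      = (1 / 2) * Real.Gamma ((m + 1) / 2) := by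
  have h := integral_rpow_mul_exp_neg_rpow (p := 2) (q := (m : ℝ)) zero_lt_two
    (by exact lt_of_lt_of_le neg_one_lt_zero (Nat.cast_nonneg m))
  rw [← h]
  refine setIntegral_congr_fun measurableSet_Ioi fun x hx => ?_
  have h2 : x ^ (2 : ℝ) = x ^ (2 : ℕ) := by
    rw [show (2 : ℝ) = ((2 : ℕ) : ℝ) by norm_num, Real.rpow_natCast]
  rw [Real.rpow_natCast, h2]

/-- Two-sided even Gaussian moment. -/
lemma gauss_moment (k : ℕ) :
    ∫ t : ℝ, t ^ (2 * k) * Real.exp (-t ^ 2) = Real.Gamma (k + 1 / 2) := by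
  have heven : ∀ t : ℝ, t ^ (2 * k) * Real.exp (-t ^ 2)
      = (fun s : ℝ => s ^ (2 * k) * Real.exp (-s ^ 2)) |t| := by
    intro t
    simp only
    rw [mul_comm 2 k, pow_mul, pow_mul, pow_abs, sq_abs, sq_abs]
  calc ∫ t : ℝ, t ^ (2 * k) * Real.exp (-t ^ 2)
      = ∫ t : ℝ, (fun s : ℝ => s ^ (2 * k) * Real.exp (-s ^ 2)) |t| := by
        simp_rw [← heven]
    _ = 2 * ∫ t in Ioi (0 : ℝ), t ^ (2 * k) * Real.exp (-t ^ 2) :=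
        integral_comp_abs (f := fun s : ℝ => s ^ (2 * k) * Real.exp (-s ^ 2))
    _ = Real.Gamma (k + 1 / 2) := by
        rw [int_Ioi_pow_exp]
        have : (((2 * k : ℕ) : ℝ) + 1) / 2 = k + 1 / 2 := by push_cast; ring
        rw [this]; ring

local notation "E3" => EuclideanSpace ℝ (Fin 3)

/-- The one-dimensional factorization of the Gaussian moment on `ℝ³`. -/
lemma gauss_pi (n : ℕ) :
    ∫ y : Fin 3 → ℝ, (y 0) ^ (2 * n) * Real.exp (-∑ i, (y i) ^ 2)
      = Real.Gamma (n + 1 / 2) * Real.Gamma (1 / 2) ^ 2 := by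
  have key : ∀ y : Fin 3 → ℝ,
      (y 0) ^ (2 * n) * Real.exp (-∑ i, (y i) ^ 2)
        = ∏ i : Fin 3, (fun i (t : ℝ) =>
            (if i = 0 then t ^ (2 * n) else 1) * Real.exp (-t ^ 2) : Fin 3 → ℝ → ℝ) i (y i) := by
    intro y
    rw [Fin.prod_univ_three]
    simp only [if_pos rfl, if_true, if_neg (show (1 : Fin 3) ≠ 0 by decide),
      if_neg (show (2 : Fin 3) ≠ 0 by decide), one_mul, Fin.sum_univ_three]
    rw [show -(y 0 ^ 2 + y 1 ^ 2 + y 2 ^ 2)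
        = -(y 0 ^ 2) + -(y 1 ^ 2) + -(y 2 ^ 2) by ring, Real.exp_add, Real.exp_add]
    ring
  simp_rw [key]
  rw [MeasureTheory.integral_fintype_prod_volume_eq_prod (𝕜 := ℝ) (ι := Fin 3)
    (f := fun i (t : ℝ) => (if i = 0 then t ^ (2 * n) else 1) * Real.exp (-t ^ 2))]
  rw [Fin.prod_univ_three]
  simp only [if_pos rfl, if_true, if_neg (show (1 : Fin 3) ≠ 0 by decide),
    if_neg (show (2 : Fin 3) ≠ 0 by decide), one_mul]
  have h0 : ∫ t : ℝ, Real.exp (-t ^ 2) = Real.Gamma (1 / 2) := by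
    have := gauss_moment 0
    simpa using this
  rw [gauss_moment n, h0]
  ring

/-- Full-space Gaussian moment. -/
lemma gaussE (a : E3) (n : ℕ) :
    ∫ x : E3, (inner ℝ a x : ℝ) ^ (2 * n) * Real.exp (-‖x‖ ^ 2)
      = ‖a‖ ^ (2 * n) * (Real.Gamma (n + 1 / 2) * Real.Gamma (1 / 2) ^ 2) := by
  classical
  set e₀ : E3 := EuclideanSpace.single (0 : Fin 3) (1 : ℝ) with he₀
  set b : E3 := ‖a‖ • e₀ with hbdef
  have hb : ‖b‖ = ‖a‖ := by
    rw [hbdef, norm_smul, EuclideanSpace.norm_single]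
    simp
  set T : E3 ≃ₗᵢ[ℝ] E3 := Submodule.reflection (ℝ ∙ (b - a))ᗮ with hT
  have hTb : T b = a := Submodule.reflection_sub hb
  have hmp : MeasurePreserving T volume volume := T.measurePreserving
  have step1 : ∫ x : E3, (inner ℝ a x : ℝ) ^ (2 * n) * Real.exp (-‖x‖ ^ 2)
      = ∫ x : E3, (‖a‖ * x 0) ^ (2 * n) * Real.exp (-‖x‖ ^ 2) := by
    rw [← hmp.integral_comp T.toHomeomorph.measurableEmbedding
      (fun x : E3 => (inner ℝ a x : ℝ) ^ (2 * n) * Real.exp (-‖x‖ ^ 2))]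
    have hfx : ∀ x : E3, (inner ℝ a (T x) : ℝ) = ‖a‖ * x 0 := by
      intro x
      have h1 : (inner ℝ a (T x) : ℝ) = (inner ℝ (T b) (T x) : ℝ) := by rw [hTb]
      rw [h1, T.inner_map_map, hbdef, real_inner_smul_left, he₀,
        EuclideanSpace.inner_single_left]
      simp
    refine integral_congr_ae (Filter.Eventually.of_forall fun x => ?_)
    simp only [LinearIsometryEquiv.coe_toHomeomorph]
    rw [hfx x, T.norm_map]
  rw [step1]
  simp_rw [mul_pow, mul_assoc]
  rw [MeasureTheory.integral_const_mul]
  congr 1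
  have hvol := (EuclideanSpace.volume_preserving_symm_measurableEquiv_toLp (Fin 3)).symm
  rw [← hvol.integral_comp (MeasurableEquiv.measurableEmbedding _)
    (fun x : E3 => (x 0) ^ (2 * n) * Real.exp (-‖x‖ ^ 2))]
  rw [← gauss_pi n]
  refine integral_congr_ae (Filter.Eventually.of_forall fun y => ?_)
  have hcoord : ∀ i, ((MeasurableEquiv.toLp 2 (Fin 3 → ℝ)).symm.symm y) i = y i := fun i => rfl
  have hnorm : ‖(MeasurableEquiv.toLp 2 (Fin 3 → ℝ)).symm.symm y‖ ^ 2 = ∑ i, (y i) ^ 2 := by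
    rw [EuclideanSpace.norm_eq]
    rw [Real.sq_sqrt (by positivity)]
    simp [hcoord, sq_abs]
  dsimp only
  rw [hnorm, hcoord 0]

/-- Polar factorization of the Gaussian moment integral over `ℝ³`. -/
lemma sphere_decomp (a : E3) (n : ℕ) :
    (∫ θ : sphere (0 : E3) 1, (inner ℝ a (θ : E3) : ℝ) ^ (2 * n)
        ∂(volume : Measure E3).toSphere)
      * ∫ r in Ioi (0 : ℝ), r ^ (2 * n + 2) * Real.exp (-r ^ 2)
    = ∫ x : E3, (inner ℝ a x : ℝ) ^ (2 * n) * Real.exp (-‖x‖ ^ 2) := by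
  have hdim : Module.finrank ℝ E3 - 1 = 2 := by
    rw [finrank_euclideanSpace_fin]
  have hmp := (volume : Measure E3).measurePreserving_homeomorphUnitSphereProd
  rw [hdim] at hmp
  have h3 : ∫ r : Ioi (0 : ℝ), (r : ℝ) ^ (2 * n) * Real.exp (-(r : ℝ) ^ 2)
        ∂(Measure.volumeIoiPow 2)
      = ∫ r in Ioi (0 : ℝ), r ^ (2 * n + 2) * Real.exp (-r ^ 2) := by
    rw [Measure.volumeIoiPow]
    simp only [ENNReal.ofReal]
    rw [integral_withDensity_eq_integral_smul
      ((measurable_subtype_coe.pow_const _).real_toNNReal)]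
    rw [integral_subtype_comap measurableSet_Ioi
      (fun r : ℝ => Real.toNNReal (r ^ 2) • (r ^ (2 * n) * Real.exp (-r ^ 2)))]
    refine setIntegral_congr_fun measurableSet_Ioi fun x hx => ?_
    rw [NNReal.smul_def, Real.coe_toNNReal _ (pow_nonneg (le_of_lt hx) 2), smul_eq_mul]
    ring
  have h2 : ∫ x : ({0}ᶜ : Set E3),
        (inner ℝ a (x : E3) : ℝ) ^ (2 * n) * Real.exp (-‖(x : E3)‖ ^ 2)
        ∂((volume : Measure E3).comap (↑))
      = ∫ p : sphere (0 : E3) 1 × Ioi (0 : ℝ),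
          (inner ℝ a (p.1 : E3) : ℝ) ^ (2 * n)
            * ((p.2 : ℝ) ^ (2 * n) * Real.exp (-(p.2 : ℝ) ^ 2))
          ∂((volume : Measure E3).toSphere.prod (Measure.volumeIoiPow 2)) := by
    rw [← hmp.integral_comp (Homeomorph.measurableEmbedding _)
      (fun p : sphere (0 : E3) 1 × Ioi (0 : ℝ) =>
        (inner ℝ a (p.1 : E3) : ℝ) ^ (2 * n)
          * ((p.2 : ℝ) ^ (2 * n) * Real.exp (-(p.2 : ℝ) ^ 2)))]
    refine integral_congr_ae (Filter.Eventually.of_forall fun x => ?_)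
    have hx : ‖(x : E3)‖ ≠ 0 := norm_ne_zero_iff.mpr x.2
    simp only [homeomorphUnitSphereProd_apply_fst_coe, homeomorphUnitSphereProd_apply_snd_coe]
    rw [real_inner_smul_right, mul_pow, inv_pow]
    field_simp
  calc (∫ θ : sphere (0 : E3) 1, (inner ℝ a (θ : E3) : ℝ) ^ (2 * n)
        ∂(volume : Measure E3).toSphere)
      * ∫ r in Ioi (0 : ℝ), r ^ (2 * n + 2) * Real.exp (-r ^ 2)
      = (∫ θ : sphere (0 : E3) 1, (inner ℝ a (θ : E3) : ℝ) ^ (2 * n)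
          ∂(volume : Measure E3).toSphere)
        * ∫ r : Ioi (0 : ℝ), (r : ℝ) ^ (2 * n) * Real.exp (-(r : ℝ) ^ 2)
            ∂(Measure.volumeIoiPow 2) := by rw [h3]
    _ = ∫ p : sphere (0 : E3) 1 × Ioi (0 : ℝ),
          (inner ℝ a (p.1 : E3) : ℝ) ^ (2 * n)
            * ((p.2 : ℝ) ^ (2 * n) * Real.exp (-(p.2 : ℝ) ^ 2))
          ∂((volume : Measure E3).toSphere.prod (Measure.volumeIoiPow 2)) :=
        (integral_prod_mul (L := ℝ)
          (fun θ : sphere (0 : E3) 1 => (inner ℝ a (θ : E3) : ℝ) ^ (2 * n))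
          (fun r : Ioi (0 : ℝ) => (r : ℝ) ^ (2 * n) * Real.exp (-(r : ℝ) ^ 2))).symm
    _ = ∫ x : ({0}ᶜ : Set E3),
          (inner ℝ a (x : E3) : ℝ) ^ (2 * n) * Real.exp (-‖(x : E3)‖ ^ 2)
          ∂((volume : Measure E3).comap (↑)) := h2.symm
    _ = ∫ x in ({0}ᶜ : Set E3), (inner ℝ a x : ℝ) ^ (2 * n) * Real.exp (-‖x‖ ^ 2) :=
        integral_subtype_comap (μ := (volume : Measure E3))
          (measurableSet_singleton (0 : E3)).compl
          (fun x : E3 => (inner ℝ a x : ℝ) ^ (2 * n) * Real.exp (-‖x‖ ^ 2))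
    _ = ∫ x : E3, (inner ℝ a x : ℝ) ^ (2 * n) * Real.exp (-‖x‖ ^ 2) := by
        rw [restrict_compl_singleton]

end

end SphereAvgAux

end SphereAvgAuxSection

open Set Real SphereAvgAux

/-- The average of `(a · x)^(2n)` over the unit sphere `S² ⊂ ℝ³`
(with its uniform probability measure) equals `‖a‖^(2n) / (2n + 1)`. -/
theorem average_even_power_inner_sphere
    (a : EuclideanSpace ℝ (Fin 3)) (n : ℕ) :
    (⨍ x : Metric.sphere (0 : EuclideanSpace ℝ (Fin 3)) 1,
        (inner ℝ a (x : EuclideanSpace ℝ (Fin 3)) : ℝ) ^ (2 * n)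
      ∂(volume : Measure (EuclideanSpace ℝ (Fin 3))).toSphere)
      = ‖a‖ ^ (2 * n) / (2 * n + 1) := by
  have G0 : (0 : ℝ) < Real.Gamma (1 / 2) := Real.Gamma_pos_of_pos (by norm_num)
  have Gn : (0 : ℝ) < Real.Gamma ((n : ℝ) + 1 / 2) := Real.Gamma_pos_of_pos (by positivity)
  have hRn : ∫ r in Ioi (0 : ℝ), r ^ (2 * n + 2) * Real.exp (-r ^ 2)
      = (1 / 2) * (((n : ℝ) + 1 / 2) * Real.Gamma ((n : ℝ) + 1 / 2)) := by
    rw [int_Ioi_pow_exp (2 * n + 2),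
      show (((2 * n + 2 : ℕ) : ℝ) + 1) / 2 = ((n : ℝ) + 1 / 2) + 1 by push_cast; ring,
      Real.Gamma_add_one (by positivity)]
  have hR0 : ∫ r in Ioi (0 : ℝ), r ^ (2 * 0 + 2) * Real.exp (-r ^ 2)
      = (1 / 2) * ((1 / 2) * Real.Gamma (1 / 2)) := by
    rw [int_Ioi_pow_exp (2 * 0 + 2),
      show (((2 * 0 + 2 : ℕ) : ℝ) + 1) / 2 = (1 / 2 : ℝ) + 1 by push_cast; ring,
      Real.Gamma_add_one (by norm_num)]
  have hint := (sphere_decomp a n).trans (gaussE a n)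
  rw [hRn] at hint
  have hmass := (sphere_decomp 0 0).trans (gaussE 0 0)
  rw [hR0] at hmass
  simp only [mul_zero, pow_zero, norm_zero, one_mul, Nat.cast_zero, zero_add,
    integral_const, smul_eq_mul, mul_one] at hmass
  rw [average_eq, smul_eq_mul]
  have hG : Real.Gamma (1 / 2) ≠ 0 := ne_of_gt G0
  have hGn : Real.Gamma ((n : ℝ) + 1 / 2) ≠ 0 := ne_of_gt Gn
  have hn2 : ((n : ℝ) + 1 / 2) ≠ 0 := by positivity
  have hd1 : (0 : ℝ) < (1 / 2) * (((n : ℝ) + 1 / 2) * Real.Gamma ((n : ℝ) + 1 / 2)) := by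
    have h1 : (0 : ℝ) < (n : ℝ) + 1 / 2 := by positivity
    exact mul_pos (by norm_num) (mul_pos h1 Gn)
  have hd0 : (0 : ℝ) < (1 / 2) * ((1 / 2) * Real.Gamma (1 / 2)) := by
    exact mul_pos (by norm_num) (mul_pos (by norm_num) G0)
  have hI := (eq_div_iff (ne_of_gt hd1)).mpr hint
  have hM := (eq_div_iff (ne_of_gt hd0)).mpr hmass
  rw [hI, hM]
  have h2n1 : (2 * (n : ℝ) + 1) ≠ 0 := by positivity
  field_simp
end

section
/- For any a in ℝ³, radius 𝔰 > 0, and n ∈ ℕ, the integral of (a · x)^(2n) over the sphere of radius 𝔰 in ℝ³, with respect to the measure normalized so that the total measure of the sphere is 2, equals 2 𝔰^(2n) ‖a‖^(2n) / (2n + 1). -/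
open MeasureTheory

namespace SphereMomentAux

open Metric Real
open scoped ENNReal NNReal

noncomputable section

local notation "E3" => EuclideanSpace ℝ (Fin 3)

lemma cos_lip (a b : ℝ) : |Real.cos a - Real.cos b| ≤ |a - b| := by
  rw [Real.cos_sub_cos]
  calc |(-2) * Real.sin ((a + b) / 2) * Real.sin ((a - b) / 2)|
      = 2 * |Real.sin ((a + b) / 2)| * |Real.sin ((a - b) / 2)| := by
        rw [abs_mul, abs_mul]; norm_num
    _ ≤ 2 * 1 * |(a - b) / 2| :=
        mul_le_mul (by nlinarith [Real.abs_sin_le_one ((a+b)/2)]) Real.abs_sin_le_abs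
          (abs_nonneg _) (by norm_num)
    _ = |a - b| := by rw [abs_div, abs_two]; ring

lemma sin_lip (a b : ℝ) : |Real.sin a - Real.sin b| ≤ |a - b| := by
  rw [Real.sin_sub_sin]
  calc |2 * Real.sin ((a - b) / 2) * Real.cos ((a + b) / 2)|
      = 2 * |Real.sin ((a - b) / 2)| * |Real.cos ((a + b) / 2)| := by
        rw [abs_mul, abs_mul]; norm_num
    _ ≤ 2 * |(a - b) / 2| * 1 :=
        mul_le_mul (by nlinarith [Real.abs_sin_le_abs (x := (a-b)/2)])
          (Real.abs_cos_le_one _) (abs_nonneg _) (by positivity)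
    _ = |a - b| := by rw [abs_div, abs_two]; ring

lemma coord_le {ι : Type*} [Fintype ι] (x : EuclideanSpace ℝ ι) (i : ι) : |x i| ≤ ‖x‖ := by
  rw [EuclideanSpace.norm_eq, ← Real.sqrt_sq_eq_abs (x i)]
  apply Real.sqrt_le_sqrt
  have : x i ^ 2 = ‖x i‖ ^ 2 := by rw [Real.norm_eq_abs, sq_abs]
  rw [this]
  exact Finset.single_le_sum (f := fun j => ‖x j‖ ^ 2) (fun j _ => by positivity) (Finset.mem_univ i)

lemma dist_coord_le {ι : Type*} [Fintype ι] (x y : EuclideanSpace ℝ ι) (i : ι) :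
    dist (x i) (y i) ≤ dist x y := by
  have := coord_le (x - y) i
  simpa [dist_eq_norm, Real.norm_eq_abs] using this

/-- spherical coordinates map -/
def ψ (𝔰 : ℝ) : ℝ × ℝ → E3 := fun p =>
  (WithLp.equiv 2 _).symm
    ![𝔰 * (Real.cos p.1 * Real.sin p.2), 𝔰 * (Real.sin p.1 * Real.sin p.2), 𝔰 * Real.cos p.2]

lemma psi_lip (𝔰 : ℝ) (h𝔰 : 0 < 𝔰) : LipschitzWith (Real.toNNReal (4 * 𝔰)) (ψ 𝔰) := by
  apply LipschitzWith.of_dist_le_mul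
  intro u v
  have hcoe : ((Real.toNNReal (4 * 𝔰)) : ℝ) = 4 * 𝔰 := Real.coe_toNNReal _ (by positivity)
  rw [hcoe]
  set D := dist u v with hD
  have hD0 : 0 ≤ D := dist_nonneg
  have h1 : |u.1 - v.1| ≤ D := by
    rw [hD, Prod.dist_eq]
    exact le_trans (le_of_eq (Real.dist_eq u.1 v.1).symm) (le_max_left _ _)
  have h2 : |u.2 - v.2| ≤ D := by
    rw [hD, Prod.dist_eq]
    exact le_trans (le_of_eq (Real.dist_eq u.2 v.2).symm) (le_max_right _ _)
  -- coordinatewise bounds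
  have key : ∀ (f g : ℝ → ℝ), (∀ a b, |f a - f b| ≤ |a - b|) → (∀ a b, |g a - g b| ≤ |a - b|) →
      (∀ t, |f t| ≤ 1) → (∀ t, |g t| ≤ 1) →
      |f u.1 * g u.2 - f v.1 * g v.2| ≤ 2 * D := by
    intro f g hf hg hfb hgb
    have : f u.1 * g u.2 - f v.1 * g v.2 = (f u.1 - f v.1) * g u.2 + f v.1 * (g u.2 - g v.2) := by
      ring
    rw [this]
    calc |(f u.1 - f v.1) * g u.2 + f v.1 * (g u.2 - g v.2)|
        ≤ |(f u.1 - f v.1) * g u.2| + |f v.1 * (g u.2 - g v.2)| := abs_add_le _ _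
      _ = |f u.1 - f v.1| * |g u.2| + |f v.1| * |g u.2 - g v.2| := by rw [abs_mul, abs_mul]
      _ ≤ D * 1 + 1 * D := by
          gcongr
          · exact le_trans (hf _ _) h1
          · exact hgb _
          · exact hfb _
          · exact le_trans (hg _ _) h2
      _ = 2 * D := by ring
  have hb0 : |Real.cos u.1 * Real.sin u.2 - Real.cos v.1 * Real.sin v.2| ≤ 2 * D :=
    key Real.cos Real.sin cos_lip sin_lip Real.abs_cos_le_one Real.abs_sin_le_one
  have hb1 : |Real.sin u.1 * Real.sin u.2 - Real.sin v.1 * Real.sin v.2| ≤ 2 * D :=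
    key Real.sin Real.sin sin_lip sin_lip Real.abs_sin_le_one Real.abs_sin_le_one
  have hb2 : |Real.cos u.2 - Real.cos v.2| ≤ 2 * D := by
    calc |Real.cos u.2 - Real.cos v.2| ≤ |u.2 - v.2| := cos_lip _ _
      _ ≤ D := h2
      _ ≤ 2 * D := by linarith
  rw [EuclideanSpace.dist_eq]
  have hcb : ∀ i : Fin 3, dist (ψ 𝔰 u i) (ψ 𝔰 v i) ^ 2 ≤ (2 * 𝔰 * D) ^ 2 := by
    intro i
    have habs : ∀ (A B : ℝ), |A - B| ≤ 2 * D → dist (𝔰 * A) (𝔰 * B) ^ 2 ≤ (2 * 𝔰 * D) ^ 2 := by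
      intro A B hAB
      rw [Real.dist_eq]
      have : |𝔰 * A - 𝔰 * B| = 𝔰 * |A - B| := by
        rw [← mul_sub, abs_mul, abs_of_pos h𝔰]
      rw [this]
      have h' : 𝔰 * |A - B| ≤ 2 * 𝔰 * D := by nlinarith
      exact pow_le_pow_left₀ (by positivity) h' 2
    fin_cases i
    · exact habs _ _ hb0
    · exact habs _ _ hb1
    · exact habs _ _ hb2
  calc √(∑ i : Fin 3, dist (ψ 𝔰 u i) (ψ 𝔰 v i) ^ 2)
      ≤ √(3 * (2 * 𝔰 * D) ^ 2) := by
        apply Real.sqrt_le_sqrt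
        calc ∑ i : Fin 3, dist (ψ 𝔰 u i) (ψ 𝔰 v i) ^ 2
            ≤ ∑ _i : Fin 3, (2 * 𝔰 * D) ^ 2 := Finset.sum_le_sum (fun i _ => hcb i)
          _ = 3 * (2 * 𝔰 * D) ^ 2 := by norm_num [Finset.sum_const]
    _ ≤ 4 * 𝔰 * D := by
        rw [show (4:ℝ) * 𝔰 * D = √((4 * 𝔰 * D)^2) by rw [Real.sqrt_sq (by positivity)]]
        apply Real.sqrt_le_sqrt
        nlinarith [sq_nonneg D]

lemma sphere_subset (𝔰 : ℝ) (h𝔰 : 0 < 𝔰) :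
    sphere (0 : E3) 𝔰 ⊆ ψ 𝔰 '' (Set.Icc (-π) π ×ˢ Set.Icc 0 π) := by
  intro x hx
  have hnorm : ‖x‖ = 𝔰 := by rwa [mem_sphere_zero_iff_norm] at hx
  have hsum : x 0 ^ 2 + x 1 ^ 2 + x 2 ^ 2 = 𝔰 ^ 2 := by
    have := EuclideanSpace.norm_eq x
    rw [hnorm] at this
    have h2 : 𝔰 ^ 2 = ∑ i : Fin 3, ‖x i‖ ^ 2 := by
      rw [← Real.sq_sqrt (by positivity : (0:ℝ) ≤ ∑ i : Fin 3, ‖x i‖ ^ 2), ← this]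
    rw [h2, Fin.sum_univ_three]
    simp [Real.norm_eq_abs, sq_abs]
  set c : ℝ := x 2 / 𝔰 with hc
  have hc1 : |c| ≤ 1 := by
    rw [hc, abs_div, abs_of_pos h𝔰, div_le_one h𝔰]
    calc |x 2| ≤ ‖x‖ := coord_le x 2
      _ = 𝔰 := hnorm
  set φ : ℝ := Real.arccos c with hφ
  have hφmem : φ ∈ Set.Icc 0 π := ⟨Real.arccos_nonneg c, Real.arccos_le_pi c⟩
  have hcosφ : Real.cos φ = c := Real.cos_arccos (neg_le_of_abs_le hc1) (le_of_abs_le hc1)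
  have hsinφ : Real.sin φ = Real.sqrt (1 - c ^ 2) := Real.sin_arccos c
  have hx2 : 𝔰 * Real.cos φ = x 2 := by rw [hcosφ, hc]; field_simp
  set r : ℝ := 𝔰 * Real.sin φ with hr
  have hr0 : 0 ≤ r := by
    rw [hr]
    exact mul_nonneg h𝔰.le (Real.sin_nonneg_of_mem_Icc hφmem)
  have hrsq : x 0 ^ 2 + x 1 ^ 2 = r ^ 2 := by
    have hcsq : (1 - c ^ 2) = (𝔰 ^ 2 - x 2 ^ 2) / 𝔰 ^ 2 := by
      rw [hc]; field_simp
    have : r ^ 2 = 𝔰 ^ 2 * (1 - c ^ 2) := by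
      rw [hr, mul_pow, hsinφ, Real.sq_sqrt (by nlinarith [sq_abs c, abs_nonneg c] : (0:ℝ) ≤ 1 - c ^ 2)]
    rw [this, hcsq]
    field_simp
    nlinarith [hsum]
  rcases eq_or_lt_of_le hr0 with hr0' | hrpos
  · -- r = 0 case
    have hx0 : x 0 = 0 := by nlinarith [sq_nonneg (x 0), sq_nonneg (x 1)]
    have hx1 : x 1 = 0 := by nlinarith [sq_nonneg (x 0), sq_nonneg (x 1)]
    have h0mem : (0:ℝ) ∈ Set.Icc (-π) π := ⟨by linarith [Real.pi_pos], Real.pi_pos.le⟩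
    refine ⟨(0, φ), ⟨h0mem, hφmem⟩, ?_⟩
    have hsφ : Real.sin φ = 0 := by
      have : 𝔰 * Real.sin φ = 0 := hr0'.symm
      rcases mul_eq_zero.1 this with h | h
      · linarith
      · exact h
    ext i
    fin_cases i <;>
      simp [ψ, WithLp.equiv_symm_apply, hsφ, hx0, hx1, hx2, Real.cos_zero, Real.sin_zero]
  · -- r > 0 case
    have hx0r : |x 0 / r| ≤ 1 := by
      rw [abs_div, abs_of_pos hrpos, div_le_one hrpos]
      nlinarith [sq_abs (x 0), sq_nonneg (x 1)]
    set θ : ℝ := if 0 ≤ x 1 then Real.arccos (x 0 / r) else -Real.arccos (x 0 / r) with hθ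
    have hθmem : θ ∈ Set.Icc (-π) π := by
      rcases le_or_gt 0 (x 1) with h | h
      · rw [hθ, if_pos h]
        exact ⟨by linarith [Real.arccos_nonneg (x 0 / r), Real.pi_pos], Real.arccos_le_pi _⟩
      · rw [hθ, if_neg (not_le.2 h)]
        constructor
        · simpa using Real.arccos_le_pi (x 0 / r)
        · linarith [Real.arccos_nonneg (x 0 / r), Real.pi_pos]
    have hcosθ : Real.cos θ = x 0 / r := by
      rcases le_or_gt 0 (x 1) with h | h
      · rw [hθ, if_pos h]; exact Real.cos_arccos (neg_le_of_abs_le hx0r) (le_of_abs_le hx0r)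
      · rw [hθ, if_neg (not_le.2 h), Real.cos_neg]
        exact Real.cos_arccos (neg_le_of_abs_le hx0r) (le_of_abs_le hx0r)
    have hsinθ : Real.sin θ = x 1 / r := by
      have hs : Real.sin (Real.arccos (x 0 / r)) = Real.sqrt (1 - (x 0 / r) ^ 2) :=
        Real.sin_arccos _
      have hval : Real.sqrt (1 - (x 0 / r) ^ 2) = |x 1| / r := by
        have hsq : (x 0 / r) ^ 2 + (x 1 / r) ^ 2 = 1 := by
          rw [div_pow, div_pow, ← add_div, hrsq, div_self (by positivity : (r:ℝ)^2 ≠ 0)]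
        have : 1 - (x 0 / r) ^ 2 = (x 1 / r) ^ 2 := by linarith
        rw [this, Real.sqrt_sq_eq_abs, abs_div, abs_of_pos hrpos]
      rcases le_or_gt 0 (x 1) with h | h
      · rw [hθ, if_pos h, hs, hval, abs_of_nonneg h]
      · rw [hθ, if_neg (not_le.2 h), Real.sin_neg, hs, hval, abs_of_neg h]; ring
    refine ⟨(θ, φ), ⟨hθmem, hφmem⟩, ?_⟩
    have key0 : 𝔰 * (Real.cos θ * Real.sin φ) = x 0 := by
      rw [hcosθ]
      have : 𝔰 * (x 0 / r * Real.sin φ) = (𝔰 * Real.sin φ) * (x 0 / r) := by ring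
      rw [this, ← hr, mul_comm r (x 0 / r), div_mul_cancel₀ _ hrpos.ne']
    have key1 : 𝔰 * (Real.sin θ * Real.sin φ) = x 1 := by
      rw [hsinθ]
      have : 𝔰 * (x 1 / r * Real.sin φ) = (𝔰 * Real.sin φ) * (x 1 / r) := by ring
      rw [this, ← hr, mul_comm r (x 1 / r), div_mul_cancel₀ _ hrpos.ne']
    ext i
    fin_cases i <;> simp [ψ, WithLp.equiv_symm_apply, key0, key1, hx2]

lemma sphere_meas_lt_top (𝔰 : ℝ) (h𝔰 : 0 < 𝔰) : μH[2] (sphere (0 : E3) 𝔰) < ⊤ := by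
  have h1 : μH[2] (sphere (0 : E3) 𝔰) ≤ μH[2] (ψ 𝔰 '' (Set.Icc (-π) π ×ˢ Set.Icc 0 π)) :=
    measure_mono (sphere_subset 𝔰 h𝔰)
  have h2 : μH[2] (ψ 𝔰 '' (Set.Icc (-π) π ×ˢ Set.Icc 0 π))
      ≤ (Real.toNNReal (4 * 𝔰) : ℝ≥0∞) ^ (2:ℝ) * μH[2] (Set.Icc (-π) π ×ˢ Set.Icc 0 π) :=
    (psi_lip 𝔰 h𝔰).hausdorffMeasure_image_le (by norm_num) _
  have h3 : (μH[2] : Measure (ℝ × ℝ)) (Set.Icc (-π) π ×ˢ Set.Icc 0 π)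
      = volume (Set.Icc (-π) π ×ˢ Set.Icc 0 π) := by
    rw [MeasureTheory.hausdorffMeasure_prod_real]
  have h4 : volume (Set.Icc (-π) π ×ˢ Set.Icc 0 π) < ⊤ :=
    ((isCompact_Icc).prod isCompact_Icc).measure_lt_top
  calc μH[2] (sphere (0 : E3) 𝔰) ≤ _ := h1
    _ ≤ (Real.toNNReal (4 * 𝔰) : ℝ≥0∞) ^ (2:ℝ) * μH[2] (Set.Icc (-π) π ×ˢ Set.Icc 0 π) := h2
    _ < ⊤ := by
        rw [h3]
        exact ENNReal.mul_lt_top (ENNReal.rpow_lt_top_of_nonneg (by norm_num) ENNReal.coe_ne_top) h4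

lemma sphere_meas_pos (𝔰 : ℝ) (h𝔰 : 0 < 𝔰) : 0 < μH[2] (sphere (0 : E3) 𝔰) := by
  set proj : E3 → ℝ × ℝ := fun x => (x 0, x 1) with hproj
  have hlip : LipschitzWith 1 proj := by
    apply LipschitzWith.of_dist_le_mul
    intro x y
    rw [Prod.dist_eq]
    simp only [NNReal.coe_one, one_mul]
    exact max_le (dist_coord_le x y 0) (dist_coord_le x y 1)
  have hsub : closedBall (0 : ℝ × ℝ) (𝔰 / 2) ⊆ proj '' sphere (0 : E3) 𝔰 := by
    rintro ⟨p, q⟩ hpq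
    rw [mem_closedBall, Prod.dist_eq] at hpq
    have hp : |p| ≤ 𝔰 / 2 := by
      refine le_trans ?_ hpq
      refine le_trans ?_ (le_max_left _ _)
      simp [Real.dist_eq]
    have hq : |q| ≤ 𝔰 / 2 := by
      refine le_trans ?_ hpq
      refine le_trans ?_ (le_max_right _ _)
      simp [Real.dist_eq]
    have hp2 : p ^ 2 ≤ (𝔰 / 2) ^ 2 := by rw [← sq_abs]; exact pow_le_pow_left₀ (abs_nonneg p) hp 2
    have hq2 : q ^ 2 ≤ (𝔰 / 2) ^ 2 := by rw [← sq_abs]; exact pow_le_pow_left₀ (abs_nonneg q) hq 2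
    have hrad : 0 ≤ 𝔰 ^ 2 - p ^ 2 - q ^ 2 := by nlinarith
    set t : ℝ := Real.sqrt (𝔰 ^ 2 - p ^ 2 - q ^ 2) with ht
    have ht2 : t ^ 2 = 𝔰 ^ 2 - p ^ 2 - q ^ 2 := Real.sq_sqrt hrad
    set x : E3 := (WithLp.equiv 2 _).symm ![p, q, t] with hx
    refine ⟨x, ?_, ?_⟩
    · rw [mem_sphere_zero_iff_norm, EuclideanSpace.norm_eq]
      rw [Fin.sum_univ_three]
      have e0 : x 0 = p := rfl
      have e1 : x 1 = q := rfl
      have e2 : x 2 = t := rfl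
      rw [e0, e1, e2]
      simp only [Real.norm_eq_abs, sq_abs]
      rw [show p ^ 2 + q ^ 2 + t ^ 2 = 𝔰 ^ 2 by rw [ht2]; ring]
      exact Real.sqrt_sq h𝔰.le
    · rfl
  have h1 : volume (closedBall (0 : ℝ × ℝ) (𝔰 / 2)) ≤ μH[2] (proj '' sphere (0 : E3) 𝔰) := by
    rw [← MeasureTheory.hausdorffMeasure_prod_real]
    exact measure_mono hsub
  have h2 : μH[2] (proj '' sphere (0 : E3) 𝔰) ≤ (1 : ℝ≥0∞) ^ (2:ℝ) * μH[2] (sphere (0 : E3) 𝔰) := by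
    have := hlip.hausdorffMeasure_image_le (by norm_num : (0:ℝ) ≤ 2) (sphere (0 : E3) 𝔰)
    simpa using this
  have hpos : 0 < volume (closedBall (0 : ℝ × ℝ) (𝔰 / 2)) :=
    measure_closedBall_pos _ _ (by positivity)
  calc (0 : ℝ≥0∞) < volume (closedBall (0 : ℝ × ℝ) (𝔰 / 2)) := hpos
    _ ≤ μH[2] (proj '' sphere (0 : E3) 𝔰) := h1
    _ ≤ (1 : ℝ≥0∞) ^ (2:ℝ) * μH[2] (sphere (0 : E3) 𝔰) := h2
    _ = μH[2] (sphere (0 : E3) 𝔰) := by simp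

/-- restricted Hausdorff measure on the sphere -/
def ρ (𝔰 : ℝ) : Measure E3 := (μH[2] : Measure E3).restrict (sphere (0 : E3) 𝔰)

lemma map_rho (𝔰 : ℝ) (g : E3 ≃ₗᵢ[ℝ] E3) : Measure.map (⇑g) (ρ 𝔰) = ρ 𝔰 := by
  have hpre : (⇑g) ⁻¹' (sphere (0 : E3) 𝔰) = sphere (0 : E3) 𝔰 := by
    ext x
    simp only [Set.mem_preimage, mem_sphere_zero_iff_norm, g.norm_map]
  have hmap : Measure.map (⇑g) (μH[2] : Measure E3) = μH[2] := by
    have := g.toIsometryEquiv.map_hausdorffMeasure (2 : ℝ)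
    simpa using this
  rw [ρ, ← hpre, ← Measure.restrict_map g.continuous.measurable ((isClosed_sphere.measurableSet)), hmap, hpre]

lemma measure_preserving_rho (𝔰 : ℝ) (g : E3 ≃ₗᵢ[ℝ] E3) : MeasurePreserving (⇑g) (ρ 𝔰) (ρ 𝔰) :=
  ⟨g.continuous.measurable, map_rho 𝔰 g⟩

lemma integral_comp_rho (𝔰 : ℝ) (g : E3 ≃ₗᵢ[ℝ] E3) (f : E3 → ℝ) :
    ∫ x, f (g x) ∂(ρ 𝔰) = ∫ x, f x ∂(ρ 𝔰) :=
  (measure_preserving_rho 𝔰 g).integral_comp g.toHomeomorph.measurableEmbedding f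

lemma finite_rho (𝔰 : ℝ) (h𝔰 : 0 < 𝔰) : IsFiniteMeasure (ρ 𝔰) := by
  constructor
  rw [ρ, Measure.restrict_apply_univ]
  exact sphere_meas_lt_top 𝔰 h𝔰

lemma integrable_cont (𝔰 : ℝ) (h𝔰 : 0 < 𝔰) {f : E3 → ℝ} (hf : Continuous f) : Integrable f (ρ 𝔰) := by
  haveI := finite_rho 𝔰 h𝔰
  obtain ⟨C, hC⟩ := (isCompact_sphere (0 : E3) 𝔰).exists_bound_of_continuousOn hf.continuousOn
  refine Integrable.mono' (integrable_const C) hf.aestronglyMeasurable ?_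
  rw [ρ]
  exact (ae_restrict_iff' (isClosed_sphere.measurableSet)).2 (Filter.Eventually.of_forall hC)

def e₀ : E3 := EuclideanSpace.single 0 1
def e₁ : E3 := EuclideanSpace.single 1 1

lemma norm_e₀ : ‖(e₀ : E3)‖ = 1 := by
  rw [e₀, EuclideanSpace.norm_single, norm_one]

lemma inner_e₀ (x : E3) : (inner ℝ e₀ x : ℝ) = x 0 := by
  rw [e₀, EuclideanSpace.inner_single_left]; simp

lemma inner_e₁ (x : E3) : (inner ℝ e₁ x : ℝ) = x 1 := by
  rw [e₁, EuclideanSpace.inner_single_left]; simp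

/-- the `2n`-th pure moment -/
def cc (𝔰 : ℝ) (n : ℕ) : ℝ := ∫ x, (x 0 : ℝ) ^ (2 * n) ∂(ρ 𝔰)

/-- homogeneity: the moments of `⟪a, x⟫` only depend on `‖a‖`. -/
lemma hom (𝔰 : ℝ) (n : ℕ) (a : E3) :
    ∫ x, (inner ℝ a x : ℝ) ^ (2 * n) ∂(ρ 𝔰) = ‖a‖ ^ (2 * n) * cc 𝔰 n := by
  by_cases ha : a = 0
  · subst ha
    by_cases hn : n = 0
    · subst hn
      simp [cc]
    · have h2n : 2 * n ≠ 0 := by omega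
      simp [zero_pow h2n, cc]
  · set u : E3 := ‖a‖⁻¹ • a with hu'
    have hu : ‖u‖ = 1 := norm_smul_inv_norm ha
    obtain ⟨g, hg⟩ : ∃ g : E3 ≃ₗᵢ[ℝ] E3, g e₀ = u :=
      ⟨Submodule.reflection (Submodule.span ℝ {e₀ - u})ᗮ, Submodule.reflection_sub (by rw [hu, norm_e₀])⟩
    have hax : ∀ x : E3, (inner ℝ a x : ℝ) = ‖a‖ * (inner ℝ u x : ℝ) := by
      intro x
      have : a = ‖a‖ • u := by rw [hu', smul_inv_smul₀ (norm_ne_zero_iff.2 ha)]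
      conv_lhs => rw [this]
      rw [real_inner_smul_left]
    have hux : ∀ x : E3, (inner ℝ u x : ℝ) = (inner ℝ e₀ (g.symm x) : ℝ) := by
      intro x
      rw [← hg, ← g.inner_map_map e₀ (g.symm x), g.apply_symm_apply]
    calc ∫ x, (inner ℝ a x : ℝ) ^ (2 * n) ∂(ρ 𝔰)
        = ∫ x, ‖a‖ ^ (2 * n) * (inner ℝ u x : ℝ) ^ (2 * n) ∂(ρ 𝔰) := by
          congr 1; funext x; rw [hax x, mul_pow]
      _ = ‖a‖ ^ (2 * n) * ∫ x, (inner ℝ u x : ℝ) ^ (2 * n) ∂(ρ 𝔰) := MeasureTheory.integral_const_mul _ _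
      _ = ‖a‖ ^ (2 * n) * cc 𝔰 n := by
          congr 1
          calc ∫ x, (inner ℝ u x : ℝ) ^ (2 * n) ∂(ρ 𝔰)
              = ∫ x, ((inner ℝ e₀ (g.symm x) : ℝ)) ^ (2 * n) ∂(ρ 𝔰) := by
                congr 1; funext x; rw [hux x]
            _ = ∫ x, ((inner ℝ e₀ x : ℝ)) ^ (2 * n) ∂(ρ 𝔰) :=
                integral_comp_rho 𝔰 g.symm (fun y => ((inner ℝ e₀ y : ℝ)) ^ (2 * n))
            _ = cc 𝔰 n := by
                rw [cc]; congr 1; funext x; rw [inner_e₀]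


/-- mixed moment -/
def JJ (𝔰 : ℝ) (n : ℕ) : ℝ := ∫ x, (x 0 : ℝ) ^ (2 * n) * (x 1 : ℝ) ^ 2 ∂(ρ 𝔰)

lemma cont_coord (i : Fin 3) : Continuous fun x : E3 => (x i : ℝ) :=
  (EuclideanSpace.proj i).continuous

lemma norm_e01 (t : ℝ) : ‖e₀ + t • e₁‖ ^ 2 = 1 + t ^ 2 := by
  rw [norm_add_sq_real]
  have h1 : (inner ℝ e₀ (t • e₁) : ℝ) = 0 := by
    rw [real_inner_smul_right, inner_e₀]
    simp [e₁, EuclideanSpace.single_apply]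
  have h2 : ‖t • e₁‖ = |t| := by
    rw [norm_smul, e₁, EuclideanSpace.norm_single, norm_one, Real.norm_eq_abs, mul_one]
  rw [h1, h2, norm_e₀]
  simp [sq_abs]

lemma key_eval (𝔰 : ℝ) (h𝔰 : 0 < 𝔰) (m : ℕ) (t : ℝ) :
    ∑ k ∈ Finset.range (2 * m + 1),
        (((2 * m).choose k : ℝ) * t ^ k) * ∫ x, (x 0 : ℝ) ^ (2 * m - k) * (x 1 : ℝ) ^ k ∂(ρ 𝔰)
      = cc 𝔰 m * (1 + t ^ 2) ^ m := by
  have lhs_eq : ∫ x, ((x 0 : ℝ) + t * x 1) ^ (2 * m) ∂(ρ 𝔰)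
      = ∑ k ∈ Finset.range (2 * m + 1),
          (((2 * m).choose k : ℝ) * t ^ k) * ∫ x, (x 0 : ℝ) ^ (2 * m - k) * (x 1 : ℝ) ^ k ∂(ρ 𝔰) := by
    have point : ∀ x : E3, ((x 0 : ℝ) + t * x 1) ^ (2 * m)
        = ∑ k ∈ Finset.range (2 * m + 1),
            (((2 * m).choose k : ℝ) * t ^ k) * ((x 0 : ℝ) ^ (2 * m - k) * (x 1 : ℝ) ^ k) := by
      intro x
      rw [add_comm ((x 0 : ℝ)) (t * x 1), add_pow]
      apply Finset.sum_congr rfl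
      intro k hk
      rw [mul_pow]
      ring
    calc ∫ x, ((x 0 : ℝ) + t * x 1) ^ (2 * m) ∂(ρ 𝔰)
        = ∫ x, ∑ k ∈ Finset.range (2 * m + 1),
            (((2 * m).choose k : ℝ) * t ^ k) * ((x 0 : ℝ) ^ (2 * m - k) * (x 1 : ℝ) ^ k) ∂(ρ 𝔰) := by
          congr 1; funext x; exact point x
      _ = ∑ k ∈ Finset.range (2 * m + 1),
            ∫ x, (((2 * m).choose k : ℝ) * t ^ k) * ((x 0 : ℝ) ^ (2 * m - k) * (x 1 : ℝ) ^ k) ∂(ρ 𝔰) := by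
          apply integral_finset_sum
          intro k _
          apply Integrable.const_mul
          exact integrable_cont 𝔰 h𝔰 (((cont_coord 0).pow _).mul ((cont_coord 1).pow _))
      _ = ∑ k ∈ Finset.range (2 * m + 1),
            (((2 * m).choose k : ℝ) * t ^ k) * ∫ x, (x 0 : ℝ) ^ (2 * m - k) * (x 1 : ℝ) ^ k ∂(ρ 𝔰) := by
          apply Finset.sum_congr rfl
          intro k _
          exact MeasureTheory.integral_const_mul _ _
  have rhs_eq : ∫ x, ((x 0 : ℝ) + t * x 1) ^ (2 * m) ∂(ρ 𝔰) = cc 𝔰 m * (1 + t ^ 2) ^ m := by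
    have hin : ∀ x : E3, ((x 0 : ℝ) + t * x 1) = (inner ℝ (e₀ + t • e₁) x : ℝ) := by
      intro x
      rw [inner_add_left, real_inner_smul_left, inner_e₀, inner_e₁]
    calc ∫ x, ((x 0 : ℝ) + t * x 1) ^ (2 * m) ∂(ρ 𝔰)
        = ∫ x, (inner ℝ (e₀ + t • e₁) x : ℝ) ^ (2 * m) ∂(ρ 𝔰) := by
          congr 1; funext x; rw [hin x]
      _ = ‖e₀ + t • e₁‖ ^ (2 * m) * cc 𝔰 m := hom 𝔰 m _
      _ = cc 𝔰 m * (1 + t ^ 2) ^ m := by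
          rw [mul_comm, pow_mul, norm_e01]
  rw [← lhs_eq, rhs_eq]

lemma coeff_lemma (𝔰 : ℝ) (h𝔰 : 0 < 𝔰) (n : ℕ) :
    (2 * (n : ℝ) + 1) * JJ 𝔰 n = cc 𝔰 (n + 1) := by
  set m := n + 1 with hm
  -- two polynomials agreeing on all reals
  set p₁ : Polynomial ℝ := ∑ k ∈ Finset.range (2 * m + 1),
      Polynomial.C (((2 * m).choose k : ℝ) *
        ∫ x, (x 0 : ℝ) ^ (2 * m - k) * (x 1 : ℝ) ^ k ∂(ρ 𝔰)) * Polynomial.X ^ k with hp₁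
  set p₂ : Polynomial ℝ := Polynomial.C (cc 𝔰 m) * (1 + Polynomial.X ^ 2) ^ m with hp₂
  have heq : p₁ = p₂ := by
    apply Polynomial.funext
    intro t
    rw [hp₁, hp₂]
    simp only [Polynomial.eval_finset_sum, Polynomial.eval_mul, Polynomial.eval_C,
      Polynomial.eval_pow, Polynomial.eval_add, Polynomial.eval_one, Polynomial.eval_X]
    have := key_eval 𝔰 h𝔰 m t
    calc ∑ k ∈ Finset.range (2 * m + 1),
          (((2 * m).choose k : ℝ) *
            ∫ x, (x 0 : ℝ) ^ (2 * m - k) * (x 1 : ℝ) ^ k ∂(ρ 𝔰)) * t ^ k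
        = ∑ k ∈ Finset.range (2 * m + 1),
          (((2 * m).choose k : ℝ) * t ^ k) *
            ∫ x, (x 0 : ℝ) ^ (2 * m - k) * (x 1 : ℝ) ^ k ∂(ρ 𝔰) := by
          apply Finset.sum_congr rfl; intro k _; ring
      _ = cc 𝔰 m * (1 + t ^ 2) ^ m := this
  -- coefficient of X^2 on both sides
  have hc1 : p₁.coeff 2 = ((2 * m).choose 2 : ℝ) *
      ∫ x, (x 0 : ℝ) ^ (2 * m - 2) * (x 1 : ℝ) ^ 2 ∂(ρ 𝔰) := by
    rw [hp₁, Polynomial.finset_sum_coeff]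
    rw [Finset.sum_eq_single_of_mem 2 (by simp [hm])]
    · rw [Polynomial.coeff_C_mul, Polynomial.coeff_X_pow, if_pos rfl, mul_one]
    · intro k _ hk
      rw [Polynomial.coeff_C_mul, Polynomial.coeff_X_pow, if_neg (by omega), mul_zero]
  have hc2 : p₂.coeff 2 = cc 𝔰 m * m := by
    rw [hp₂, Polynomial.coeff_C_mul]
    congr 1
    have hexp : (1 + Polynomial.X ^ 2 : Polynomial ℝ) ^ m
        = ∑ j ∈ Finset.range (m + 1), Polynomial.C ((m.choose j : ℝ)) * Polynomial.X ^ (2 * j) := by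
      rw [add_comm (1 : Polynomial ℝ) (Polynomial.X ^ 2), add_pow]
      apply Finset.sum_congr rfl
      intro j _
      rw [one_pow, pow_mul]
      rw [Polynomial.C_eq_natCast]
      ring
    rw [hexp, Polynomial.finset_sum_coeff]
    rw [Finset.sum_eq_single_of_mem 1 (by simp [hm])]
    · rw [Polynomial.coeff_C_mul, Polynomial.coeff_X_pow, if_pos (by omega), mul_one]
      simp
    · intro j _ hj
      rw [Polynomial.coeff_C_mul, Polynomial.coeff_X_pow, if_neg (by omega), mul_zero]
  have hmain : ((2 * m).choose 2 : ℝ) * JJ 𝔰 n = cc 𝔰 m * m := by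
    have hexp2 : 2 * m - 2 = 2 * n := by omega
    rw [← hc2, ← heq, hc1, hexp2]
    rfl
  have hchoose : ((2 * m).choose 2 : ℝ) = (m : ℝ) * (2 * (n : ℝ) + 1) := by
    have : (2 * m).choose 2 = m * (2 * n + 1) := by
      rw [Nat.choose_two_right]
      have h1 : 2 * m * (2 * m - 1) = 2 * (m * (2 * n + 1)) := by
        have : 2 * m - 1 = 2 * n + 1 := by omega
        rw [this]; ring
      omega
    rw [this]; push_cast; ring
  rw [hchoose] at hmain
  have hm0 : (m : ℝ) ≠ 0 := by positivity
  have := hmain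
  rw [mul_assoc] at this
  have h2 : (m : ℝ) * ((2 * (n : ℝ) + 1) * JJ 𝔰 n) = (m : ℝ) * cc 𝔰 m := by
    rw [this]; ring
  exact mul_left_cancel₀ hm0 h2


lemma sym_lemma (𝔰 : ℝ) (n : ℕ) :
    ∫ x, (x 0 : ℝ) ^ (2 * n) * (x 2 : ℝ) ^ 2 ∂(ρ 𝔰) = JJ 𝔰 n := by
  set g : E3 ≃ₗᵢ[ℝ] E3 := LinearIsometryEquiv.piLpCongrLeft 2 ℝ ℝ (Equiv.swap (1 : Fin 3) 2)
    with hg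
  have happ : ∀ (x : E3) (i : Fin 3), g x i = x (Equiv.swap (1 : Fin 3) 2 i) := by
    intro x i
    rw [hg, LinearIsometryEquiv.piLpCongrLeft_apply]
    simp [Equiv.piCongrLeft']
  have key := integral_comp_rho 𝔰 g (fun y => (y 0 : ℝ) ^ (2 * n) * (y 2 : ℝ) ^ 2)
  have s0 : Equiv.swap (1 : Fin 3) 2 0 = 0 := by decide
  have s2 : Equiv.swap (1 : Fin 3) 2 2 = 1 := by decide
  have h2 : ∫ x, ((g x) 0 : ℝ) ^ (2 * n) * ((g x) 2 : ℝ) ^ 2 ∂(ρ 𝔰) = JJ 𝔰 n := by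
    rw [JJ]
    congr 1
  exact key.symm.trans h2

lemma recur_lemma (𝔰 : ℝ) (h𝔰 : 0 < 𝔰) (n : ℕ) :
    𝔰 ^ 2 * cc 𝔰 n = cc 𝔰 (n + 1) + 2 * JJ 𝔰 n := by
  have hcong : ∫ x, 𝔰 ^ 2 * (x 0 : ℝ) ^ (2 * n) ∂(ρ 𝔰)
      = ∫ x, ((x 0 : ℝ) ^ 2 + (x 1 : ℝ) ^ 2 + (x 2 : ℝ) ^ 2) * (x 0 : ℝ) ^ (2 * n) ∂(ρ 𝔰) := by
    rw [ρ]
    apply MeasureTheory.setIntegral_congr_fun isClosed_sphere.measurableSet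
    intro x hx
    have hnorm : ‖x‖ = 𝔰 := by rwa [mem_sphere_zero_iff_norm] at hx
    have hsum : (x 0 : ℝ) ^ 2 + (x 1 : ℝ) ^ 2 + (x 2 : ℝ) ^ 2 = 𝔰 ^ 2 := by
      have h1 := EuclideanSpace.norm_eq x
      rw [hnorm] at h1
      have h2 : 𝔰 ^ 2 = ∑ i : Fin 3, ‖x i‖ ^ 2 := by
        rw [← Real.sq_sqrt (by positivity : (0:ℝ) ≤ ∑ i : Fin 3, ‖x i‖ ^ 2), ← h1]
      rw [h2, Fin.sum_univ_three]
      simp [Real.norm_eq_abs, sq_abs]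
    simp only
    rw [hsum]
  have hsplit : ∫ x, ((x 0 : ℝ) ^ 2 + (x 1 : ℝ) ^ 2 + (x 2 : ℝ) ^ 2) * (x 0 : ℝ) ^ (2 * n) ∂(ρ 𝔰)
      = cc 𝔰 (n + 1) + JJ 𝔰 n + JJ 𝔰 n := by
    have point : ∀ x : E3, ((x 0 : ℝ) ^ 2 + (x 1 : ℝ) ^ 2 + (x 2 : ℝ) ^ 2) * (x 0 : ℝ) ^ (2 * n)
        = (x 0 : ℝ) ^ (2 * (n + 1)) + (x 0 : ℝ) ^ (2 * n) * (x 1 : ℝ) ^ 2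
          + (x 0 : ℝ) ^ (2 * n) * (x 2 : ℝ) ^ 2 := by
      intro x
      have : 2 * (n + 1) = 2 * n + 2 := by omega
      rw [this, pow_add]
      ring
    have i1 : Integrable (fun x : E3 => (x 0 : ℝ) ^ (2 * (n + 1))) (ρ 𝔰) :=
      integrable_cont 𝔰 h𝔰 ((cont_coord 0).pow _)
    have i2 : Integrable (fun x : E3 => (x 0 : ℝ) ^ (2 * n) * (x 1 : ℝ) ^ 2) (ρ 𝔰) :=
      integrable_cont 𝔰 h𝔰 (((cont_coord 0).pow _).mul ((cont_coord 1).pow _))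
    have i3 : Integrable (fun x : E3 => (x 0 : ℝ) ^ (2 * n) * (x 2 : ℝ) ^ 2) (ρ 𝔰) :=
      integrable_cont 𝔰 h𝔰 (((cont_coord 0).pow _).mul ((cont_coord 2).pow _))
    calc ∫ x, ((x 0 : ℝ) ^ 2 + (x 1 : ℝ) ^ 2 + (x 2 : ℝ) ^ 2) * (x 0 : ℝ) ^ (2 * n) ∂(ρ 𝔰)
        = ∫ x, ((x 0 : ℝ) ^ (2 * (n + 1)) + (x 0 : ℝ) ^ (2 * n) * (x 1 : ℝ) ^ 2
            + (x 0 : ℝ) ^ (2 * n) * (x 2 : ℝ) ^ 2) ∂(ρ 𝔰) := by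
          congr 1; funext x; exact point x
      _ = cc 𝔰 (n + 1) + JJ 𝔰 n + JJ 𝔰 n := by
          rw [integral_add (show Integrable (fun x : E3 => (x 0 : ℝ) ^ (2 * (n + 1))
              + (x 0 : ℝ) ^ (2 * n) * (x 1 : ℝ) ^ 2) (ρ 𝔰) from i1.add i2) i3,
            integral_add i1 i2, sym_lemma]
          rfl
  calc 𝔰 ^ 2 * cc 𝔰 n = ∫ x, 𝔰 ^ 2 * (x 0 : ℝ) ^ (2 * n) ∂(ρ 𝔰) :=
        (MeasureTheory.integral_const_mul _ _).symm
    _ = cc 𝔰 (n + 1) + JJ 𝔰 n + JJ 𝔰 n := by rw [hcong, hsplit]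
    _ = cc 𝔰 (n + 1) + 2 * JJ 𝔰 n := by ring

lemma cc_formula (𝔰 : ℝ) (h𝔰 : 0 < 𝔰) (n : ℕ) :
    cc 𝔰 n = (μH[2] (sphere (0 : E3) 𝔰)).toReal * 𝔰 ^ (2 * n) / (2 * (n : ℝ) + 1) := by
  induction n with
  | zero =>
      have : cc 𝔰 0 = ((ρ 𝔰) Set.univ).toReal := by
        rw [cc]
        simp [Measure.real_def]
      rw [this, ρ, Measure.restrict_apply_univ]
      norm_num
  | succ n ih =>
      have h1 := coeff_lemma 𝔰 h𝔰 n
      have h2 := recur_lemma 𝔰 h𝔰 n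
      have h3 : (2 * (n : ℝ) + 3) * JJ 𝔰 n = 𝔰 ^ 2 * cc 𝔰 n := by
        linear_combination h1 - h2
      set M := (μH[2] (sphere (0 : E3) 𝔰)).toReal with hM
      have hden : (2 * (n : ℝ) + 1) ≠ 0 := by positivity
      have hden3 : (2 * (n : ℝ) + 3) ≠ 0 := by positivity
      have hJJ : JJ 𝔰 n = 𝔰 ^ 2 * cc 𝔰 n / (2 * (n : ℝ) + 3) := by
        field_simp
        linarith [h3]
      have hexp : 2 * (n + 1) = 2 * n + 2 := by omega
      rw [← h1, hJJ, ih, hexp, pow_add]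
      push_cast
      field_simp
      ring


end

end SphereMomentAux

open SphereMomentAux in
/-- The integral of `(a · x)^(2n)` over the sphere of radius `𝔰` in `ℝ³`, with
respect to the uniform (2-dimensional Hausdorff) surface measure normalized so
that the total measure of the sphere is `2`, equals `2 𝔰^(2n) ‖a‖^(2n) / (2n+1)`. -/
theorem integral_even_power_inner_sphere_radius
    (a : EuclideanSpace ℝ (Fin 3)) (𝔰 : ℝ) (h𝔰 : 0 < 𝔰) (n : ℕ) :
    (∫ x, (inner ℝ a x : ℝ) ^ (2 * n)
        ∂(((2 : ENNReal) * (μH[2] (Metric.sphere (0 : EuclideanSpace ℝ (Fin 3)) 𝔰))⁻¹) •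
            (μH[2] : Measure (EuclideanSpace ℝ (Fin 3))).restrict
              (Metric.sphere (0 : EuclideanSpace ℝ (Fin 3)) 𝔰)))
      = 2 * 𝔰 ^ (2 * n) * ‖a‖ ^ (2 * n) / (2 * n + 1) := by
  have hfin := sphere_meas_lt_top 𝔰 h𝔰
  have hpos := sphere_meas_pos 𝔰 h𝔰
  rw [integral_smul_measure]
  have hrestrict : (μH[2] : Measure (EuclideanSpace ℝ (Fin 3))).restrict
      (Metric.sphere (0 : EuclideanSpace ℝ (Fin 3)) 𝔰) = ρ 𝔰 := rfl
  rw [hrestrict]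
  have hint : ∫ x, (inner ℝ a x : ℝ) ^ (2 * n) ∂(ρ 𝔰) = ‖a‖ ^ (2 * n) * cc 𝔰 n := hom 𝔰 n a
  rw [hint, cc_formula 𝔰 h𝔰 n]
  set M := (μH[2] (Metric.sphere (0 : EuclideanSpace ℝ (Fin 3)) 𝔰)).toReal with hMdef
  have hM0 : 0 < M := ENNReal.toReal_pos hpos.ne' hfin.ne
  have htoReal : ((2 : ENNReal) *
      (μH[2] (Metric.sphere (0 : EuclideanSpace ℝ (Fin 3)) 𝔰))⁻¹).toReal = 2 * M⁻¹ := by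
    rw [ENNReal.toReal_mul, ENNReal.toReal_inv]
    norm_num
    exact hMdef.symm
  rw [htoReal, smul_eq_mul]
  have hden : (2 * (n : ℝ) + 1) ≠ 0 := by positivity
  field_simp
end
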